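/- arXiv:2309.13951 — 2 statements merged into one kernel-verified Lean document; each statement's English description precedes it below -/
import Mathlib

section
/- Let K be a real closed field with a convex valuation ring O, valuation v : K^× → Γ, maximal ideal 𝔪, and residue field k. Let ac : K^> → k^> be a group homomorphism from the positive multiplicative group of K to the positive multiplicative group of k such that ac(a) = res(a) whenever v(a) = 0. Then there exists a group homomorphism s : Γ → K^> with v(s(γ)) = γ for all γ ∈ Γ and ac(a) = res(a · s(va)^{-1}) for all a ∈ K^>. -/
/-! Let `A` be the group of positive `a` with `ac a = 1`. Every `a > 0` can be corrected by a
positive unit `u` of valuation zero with `res u = ac a`, so `v` maps `A` onto `Γ`. The kernel of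
`v` on `A` is divisible, because `K^>` is divisible while `Γ` and `k^>` are torsion-free. By
Baer's criterion a divisible subgroup is a direct summand, so `v : A → Γ` has a homomorphic
section, and any section with values in `A` induces `ac`. -/

section Rootable

variable {G H : Type*} [CommGroup G] [Group H]

instance Additive.divisibleByInt {A : Type*} [Group A] [RootableBy A ℤ] :
    DivisibleBy (Additive A) ℤ where
  div a n := .ofMul (RootableBy.root a.toMul n)
  div_zero a := congrArg Additive.ofMul (RootableBy.root_zero a.toMul)
  div_cancel a hn := congrArg Additive.ofMul (RootableBy.root_cancel a.toMul hn)

theorem Subgroup.exists_retraction_of_rootableBy (D : Subgroup G) [RootableBy D ℕ] :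
    ∃ r : G →* D, ∀ d : D, r d = d := by
  let _ : RootableBy D ℤ := Group.rootableByIntOfRootableByNat D
  obtain ⟨r, hr⟩ := (Module.Baer.of_divisible (Additive D)).extension_property_addMonoidHom
    D.subtype.toAdditive D.subtype_injective (AddMonoidHom.id _)
  exact ⟨MonoidHom.toAdditive.symm r, DFunLike.congr_fun hr⟩

noncomputable abbrev MonoidHom.rootableByKer [RootableBy G ℕ] [IsMulTorsionFree H]
    (f : G →* H) : RootableBy f.ker ℕ :=
  rootableByOfPowLeftSurj _ _ fun {n} hn x => by
    refine ⟨⟨RootableBy.root (x : G) n, ?_⟩, Subtype.ext (RootableBy.root_cancel _ hn)⟩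
    refine (pow_left_injective hn).eq_iff.mp ?_
    rw [← map_pow, RootableBy.root_cancel _ hn, one_pow]
    exact x.2

theorem MonoidHom.exists_rightInverse_of_rootableBy_ker (f : G →* H)
    (hf : Function.Surjective f) [RootableBy f.ker ℕ] : ∃ s : H →* G, ∀ h, f (s h) = h := by
  obtain ⟨r, hr⟩ := f.ker.exists_retraction_of_rootableBy
  -- `g ↦ g / r g` kills `ker f`, hence factors through `G ⧸ ker f ≃* H`.
  let π : G →* G := (MonoidHom.id G) / f.ker.subtype.comp r
  have hπ : f.ker ≤ π.ker := fun d hd => by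
    simpa [π, div_eq_one] using (congrArg Subtype.val (hr ⟨d, hd⟩)).symm
  refine ⟨(QuotientGroup.lift f.ker π hπ).comp
    (QuotientGroup.quotientKerEquivOfSurjective f hf).symm.toMonoidHom, fun h => ?_⟩
  obtain ⟨g, rfl⟩ := hf h
  have : (QuotientGroup.quotientKerEquivOfSurjective f hf).symm (f g) = g := by
    rw [MulEquiv.symm_apply_eq]; rfl
  simpa [this, π] using f.mem_ker.mp (r g).2

end Rootable

section OrderedField

variable {K : Type*} [Field K] [LinearOrder K] [IsStrictOrderedRing K]

theorem IsRealClosed.exists_pos_pow_eq [IsRealClosed K] {x : K} (hx : 0 < x) {n : ℕ}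
    (hn : n ≠ 0) : ∃ y, 0 < y ∧ y ^ n = x := by
  obtain ⟨r, rfl⟩ := IsRealClosed.exists_eq_pow_of_nonneg hx.le hn
  refine ⟨|r|, abs_pos.mpr ?_, by rw [pow_abs, abs_of_pos hx]⟩
  rintro rfl
  simp [zero_pow hn] at hx

noncomputable instance Units.posSubgroup.rootableByNat [IsRealClosed K] :
    RootableBy (Units.posSubgroup K) ℕ :=
  rootableByOfPowLeftSurj _ _ fun {_} hn x => by
    obtain ⟨y, hy, hyx⟩ := IsRealClosed.exists_pos_pow_eq x.2 hn
    exact ⟨⟨Units.mk0 y hy.ne', hy⟩, Subtype.ext (Units.ext hyx)⟩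

instance Units.posSubgroup.isMulTorsionFree : IsMulTorsionFree (Units.posSubgroup K) where
  pow_left_injective _ hn a b hab :=
    Subtype.ext <| Units.ext <|
      (pow_left_inj₀ a.2.le b.2.le hn).mp congr(((($hab : _) : Kˣ) : K))

end OrderedField

section Valuation

def valHom {R Γ : Type*} [Ring R] [AddCommGroup Γ] (v : Rˣ → Γ)
    (hv : ∀ a b : Rˣ, v (a * b) = v a + v b) : Rˣ →* Multiplicative Γ :=
  MonoidHom.mk' (fun a => .ofAdd (v a)) hv

@[simp]
theorem valHom_apply {R Γ : Type*} [Ring R] [AddCommGroup Γ] (v : Rˣ → Γ)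
    (hv : ∀ a b : Rˣ, v (a * b) = v a + v b) (a : Rˣ) : valHom v hv a = .ofAdd (v a) :=
  rfl

theorem val_neg {R Γ : Type*} [Ring R] [AddCommGroup Γ] [IsAddTorsionFree Γ] (v : Rˣ → Γ)
    (hv : ∀ a b : Rˣ, v (a * b) = v a + v b) (a : Rˣ) : v (-a) = v a := by
  have h : valHom v hv (-1) = 1 :=
    (pow_eq_one_iff_left two_ne_zero).mp (by rw [← map_pow, neg_one_sq, map_one])
  have := map_mul (valHom v hv) (-1) a
  rw [h, one_mul, neg_one_mul] at this
  exact congrArg Multiplicative.toAdd this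

variable {K : Type*} [Field K] [LinearOrder K] [IsStrictOrderedRing K]
  {k : Type*} [Field k] [LinearOrder k] [IsStrictOrderedRing k]

def posHom (ac : Kˣ → k)
    (hac_mul : ∀ a b : Kˣ, 0 < (a : K) → 0 < (b : K) → ac (a * b) = ac a * ac b)
    (hac_pos : ∀ a : Kˣ, 0 < (a : K) → 0 < ac a) :
    Units.posSubgroup K →* Units.posSubgroup k :=
  MonoidHom.mk' (fun a => ⟨Units.mk0 (ac a) (hac_pos a a.2).ne', hac_pos a a.2⟩)
    fun a b => Subtype.ext <| Units.ext <| hac_mul a b a.2 b.2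

theorem exists_pos_val_eq_zero_ac_eq {Γ : Type*} [AddCommGroup Γ] [PartialOrder Γ]
    (v : Kˣ → Γ) (O : Subring K) (res : O →+* k) (ac : Kˣ → k)
    (hO : ∀ a : Kˣ, (a : K) ∈ O ↔ 0 ≤ v a)
    (hres_surj : Function.Surjective res)
    (hres_ker : ∀ (a : Kˣ) (h : (a : K) ∈ O), (res ⟨(a : K), h⟩ = 0 ↔ 0 < v a))
    (hres_pos : ∀ x : O, 0 < (x : K) → 0 ≤ res x)
    (hac_res : ∀ (a : Kˣ) (h : (a : K) ∈ O), 0 < (a : K) → v a = 0 →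
      ac a = res ⟨(a : K), h⟩) {t : k} (ht : 0 < t) :
    ∃ u : Kˣ, 0 < (u : K) ∧ v u = 0 ∧ ac u = t := by
  obtain ⟨x, rfl⟩ := hres_surj t
  have hx0 : (x : K) ≠ 0 := fun h => ht.ne' (by rw [show x = 0 from Subtype.ext h, map_zero])
  have hx : 0 < (x : K) := by
    refine hx0.lt_or_gt.resolve_left fun hneg => ?_
    have := hres_pos (-x) (by simpa using hneg)
    rw [map_neg] at this
    linarith
  let u := Units.mk0 (x : K) hx0
  have hvu : v u = 0 :=
    (((hO u).mp x.2).eq_of_not_lt fun h => ht.ne' ((hres_ker u x.2).mpr h)).symm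
  exact ⟨u, hx, hvu, hac_res u x.2 hx hvu⟩

theorem surjective_valHom_comp_ker_posHom {Γ : Type*} [AddCommGroup Γ] [LinearOrder Γ]
    [IsOrderedAddMonoid Γ] (v : Kˣ → Γ) (hv : ∀ a b : Kˣ, v (a * b) = v a + v b)
    (hvsurj : Function.Surjective v) (O : Subring K) (res : O →+* k) (ac : Kˣ → k)
    (hO : ∀ a : Kˣ, (a : K) ∈ O ↔ 0 ≤ v a)
    (hres_surj : Function.Surjective res)
    (hres_ker : ∀ (a : Kˣ) (h : (a : K) ∈ O), (res ⟨(a : K), h⟩ = 0 ↔ 0 < v a))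
    (hres_pos : ∀ x : O, 0 < (x : K) → 0 ≤ res x)
    (hac_mul : ∀ a b : Kˣ, 0 < (a : K) → 0 < (b : K) → ac (a * b) = ac a * ac b)
    (hac_pos : ∀ a : Kˣ, 0 < (a : K) → 0 < ac a)
    (hac_res : ∀ (a : Kˣ) (h : (a : K) ∈ O), 0 < (a : K) → v a = 0 →
      ac a = res ⟨(a : K), h⟩) :
    Function.Surjective ((valHom v hv).comp
      ((Units.posSubgroup K).subtype.comp (posHom ac hac_mul hac_pos).ker.subtype)) := by
  intro γ
  obtain ⟨a, ha, hvaγ⟩ : ∃ a : Kˣ, 0 < (a : K) ∧ v a = γ.toAdd := by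
    obtain ⟨a, ha⟩ := hvsurj γ.toAdd
    rcases a.ne_zero.lt_or_gt with hneg | hpos
    · exact ⟨-a, by simpa using hneg, by rw [val_neg v hv, ha]⟩
    · exact ⟨a, hpos, ha⟩
  obtain ⟨u, hu, hvu, hacu⟩ :=
    exists_pos_val_eq_zero_ac_eq v O res ac hO hres_surj hres_ker hres_pos hac_res (hac_pos a ha)
  let a' : Units.posSubgroup K := ⟨a, ha⟩
  let u' : Units.posSubgroup K := ⟨u, hu⟩
  refine ⟨⟨a' * u'⁻¹, ?_⟩, ?_⟩
  · rw [MonoidHom.mem_ker, map_mul, map_inv, mul_inv_eq_one]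
    exact Subtype.ext (Units.ext hacu.symm)
  · show valHom v hv (a * u⁻¹) = γ
    rw [map_mul, map_inv, valHom_apply, valHom_apply, hvaγ, hvu, ofAdd_zero, inv_one, mul_one,
      ofAdd_toAdd]

theorem ac_eq_res_mul_inv {Γ : Type*} [AddCommGroup Γ] (v : Kˣ → Γ)
    (hv : ∀ a b : Kˣ, v (a * b) = v a + v b) (O : Subring K) (res : O →+* k) (ac : Kˣ → k)
    (hac_mul : ∀ a b : Kˣ, 0 < (a : K) → 0 < (b : K) → ac (a * b) = ac a * ac b)
    (hac_pos : ∀ a : Kˣ, 0 < (a : K) → 0 < ac a)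
    (hac_res : ∀ (a : Kˣ) (h : (a : K) ∈ O), 0 < (a : K) → v a = 0 →
      ac a = res ⟨(a : K), h⟩)
    {a : Kˣ} (ha : 0 < (a : K)) {t : Units.posSubgroup K}
    (ht : t ∈ (posHom ac hac_mul hac_pos).ker) (hvt : v t = v a)
    (h : ((a * (t : Kˣ)⁻¹ : Kˣ) : K) ∈ O) :
    ac a = res ⟨((a * (t : Kˣ)⁻¹ : Kˣ) : K), h⟩ := by
  let a' : Units.posSubgroup K := ⟨a, ha⟩
  have hac : posHom ac hac_mul hac_pos (a' * t⁻¹) = posHom ac hac_mul hac_pos a' := by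
    rw [map_mul, map_inv, ht, inv_one, mul_one]
  have hv0 : valHom v hv (a * (t : Kˣ)⁻¹) = 1 := by
    rw [map_mul, map_inv, valHom_apply, valHom_apply, hvt, mul_inv_cancel]
  calc ac a = ac (a * (t : Kˣ)⁻¹) :=
        congrArg (fun x : Units.posSubgroup k => ((x : kˣ) : k)) hac.symm
    _ = _ := hac_res _ h (a' * t⁻¹).2 (congrArg Multiplicative.toAdd hv0)

end Valuation

theorem statement2_general
    {K : Type*} [Field K] [LinearOrder K] [IsStrictOrderedRing K]
    (hsq : ∀ x : K, 0 ≤ x → ∃ y : K, y ^ 2 = x)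
    (hodd : ∀ p : Polynomial K, Odd p.natDegree → ∃ x : K, p.IsRoot x)
    {Γ : Type*} [AddCommGroup Γ] [LinearOrder Γ] [IsOrderedAddMonoid Γ]
    (v : Kˣ → Γ) (hv : ∀ a b : Kˣ, v (a * b) = v a + v b)
    (hvsurj : Function.Surjective v)
    (O : Subring K)
    (hO : ∀ a : Kˣ, (a : K) ∈ O ↔ 0 ≤ v a)
    {k : Type*} [Field k] [LinearOrder k] [IsStrictOrderedRing k]
    (res : O →+* k)
    (hres_surj : Function.Surjective res)
    (hres_ker : ∀ (a : Kˣ) (h : (a : K) ∈ O), (res ⟨(a : K), h⟩ = 0 ↔ 0 < v a))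
    (hres_pos : ∀ x : O, 0 < (x : K) → 0 ≤ res x)
    (ac : Kˣ → k)
    (hac_mul : ∀ a b : Kˣ, 0 < (a : K) → 0 < (b : K) → ac (a * b) = ac a * ac b)
    (hac_pos : ∀ a : Kˣ, 0 < (a : K) → 0 < ac a)
    (hac_res : ∀ (a : Kˣ) (h : (a : K) ∈ O), 0 < (a : K) → v a = 0 →
      ac a = res ⟨(a : K), h⟩) :
    ∃ s : Γ → Kˣ,
      (∀ γ : Γ, (0 : K) < (s γ : K)) ∧
      (∀ γ δ : Γ, s (γ + δ) = s γ * s δ) ∧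
      (∀ γ : Γ, v (s γ) = γ) ∧
      (∀ a : Kˣ, 0 < (a : K) →
        ∀ h : ((a * (s (v a))⁻¹ : Kˣ) : K) ∈ O,
          ac a = res ⟨((a * (s (v a))⁻¹ : Kˣ) : K), h⟩) := by
  have : IsRealClosed K := .of_linearOrderedField
    (fun hx => let ⟨y, hy⟩ := hsq _ hx; ⟨y, by rw [← hy, sq]⟩) (hodd _)
  let χ := posHom ac hac_mul hac_pos
  let ν := (valHom v hv).comp ((Units.posSubgroup K).subtype.comp χ.ker.subtype)
  let _ : RootableBy χ.ker ℕ := χ.rootableByKer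
  let _ : RootableBy ν.ker ℕ := ν.rootableByKer
  obtain ⟨s, hs⟩ := ν.exists_rightInverse_of_rootableBy_ker <|
    surjective_valHom_comp_ker_posHom v hv hvsurj O res ac hO hres_surj hres_ker hres_pos
      hac_mul hac_pos hac_res
  have hvs (γ : Γ) : v (s (.ofAdd γ)) = γ := congrArg Multiplicative.toAdd (hs (.ofAdd γ))
  exact ⟨fun γ => s (.ofAdd γ), fun γ => (s _).1.2,
    fun γ δ => congrArg (fun x : χ.ker => ((x : Units.posSubgroup K) : Kˣ)) (map_mul s _ _),
    hvs, fun _ ha h =>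
      ac_eq_res_mul_inv v hv O res ac hac_mul hac_pos hac_res ha (s _).2 (hvs _) h⟩

/-- Let `K` be a real closed field (every nonnegative element has a square
root and every odd-degree polynomial has a root) with a convex valuation ring `O`,
valuation `v : Kˣ → Γ` (surjective), residue field `k` with residue map `res : O → k`,
and let `ac` be a group homomorphism from the positive multiplicative group of `K` to the
positive multiplicative group of `k` agreeing with `res` on elements of valuation zero.
Then there is a group homomorphism `s : Γ → K^>` with `v (s γ) = γ` for all `γ` and
`ac a = res (a * s (v a)⁻¹)` for all positive `a`. -/
theorem statement2
    {K : Type*} [Field K] [LinearOrder K] [IsStrictOrderedRing K]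
    (hsq : ∀ x : K, 0 ≤ x → ∃ y : K, y ^ 2 = x)
    (hodd : ∀ p : Polynomial K, Odd p.natDegree → ∃ x : K, p.IsRoot x)
    {Γ : Type*} [AddCommGroup Γ] [LinearOrder Γ] [IsOrderedAddMonoid Γ]
    (v : Kˣ → Γ) (hv : ∀ a b : Kˣ, v (a * b) = v a + v b)
    (hvsurj : Function.Surjective v)
    (O : Subring K)
    (hconv : ∀ x y : K, x ∈ O → 0 ≤ y → y ≤ x → y ∈ O)
    (hO : ∀ a : Kˣ, (a : K) ∈ O ↔ 0 ≤ v a)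
    {k : Type*} [Field k] [LinearOrder k] [IsStrictOrderedRing k]
    (res : O →+* k)
    (hres_surj : Function.Surjective res)
    (hres_ker : ∀ (a : Kˣ) (h : (a : K) ∈ O), (res ⟨(a : K), h⟩ = 0 ↔ 0 < v a))
    (hres_pos : ∀ x : O, 0 < (x : K) → 0 ≤ res x)
    (ac : Kˣ → k)
    (hac_mul : ∀ a b : Kˣ, 0 < (a : K) → 0 < (b : K) → ac (a * b) = ac a * ac b)
    (hac_pos : ∀ a : Kˣ, 0 < (a : K) → 0 < ac a)
    (hac_res : ∀ (a : Kˣ) (h : (a : K) ∈ O), 0 < (a : K) → v a = 0 →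
      ac a = res ⟨(a : K), h⟩) :
    ∃ s : Γ → Kˣ,
      (∀ γ : Γ, (0 : K) < (s γ : K)) ∧
      (∀ γ δ : Γ, s (γ + δ) = s γ * s δ) ∧
      (∀ γ : Γ, v (s γ) = γ) ∧
      (∀ a : Kˣ, 0 < (a : K) →
        ∀ h : ((a * (s (v a))⁻¹ : Kˣ) : K) ∈ O,
          ac a = res ⟨((a * (s (v a))⁻¹ : Kˣ) : K), h⟩) :=
  statement2_general hsq hodd v hv hvsurj O hO res hres_surj hres_ker hres_pos ac hac_mul hac_pos
    hac_res
end

section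
/- Let K be a field equipped with a valuation v : K^× → Γ and a derivation ∂ such that ∂O ⊆ O, where O = {a ∈ K : v(a) ≥ 0} ∪ {0}. Suppose K has many constants: for every γ ∈ Γ there exists c ∈ K^× with ∂c = 0 and v(c) = γ. Then K is monotone, i.e., v(∂a) ≥ v(a) for every a ∈ K^×. -/
/-! Write a nonzero `a` as `c * u` with `c` a constant of the same valuation, so that `u` is a
unit of the valuation ring. Then `∂a = c ∂u`, and `∂u` lies in the valuation ring because `∂`
preserves it, whence `v (∂a) = v c + v (∂u) ≥ v c = v a`. -/

theorem der_const_mul {R : Type*} [NonUnitalNonAssocSemiring R] {der : R → R}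
    (hder_mul : ∀ x y : R, der (x * y) = der x * y + x * der y) {c : R} (hc : der c = 0)
    (x : R) : der (c * x) = c * der x := by
  rw [hder_mul, hc, zero_mul, zero_add]

theorem val_le_val_der_const_mul {K : Type*} [NonUnitalNonAssocSemiring K] {Γ : Type*}
    [AddCommMonoid Γ] [PartialOrder Γ] [IsOrderedAddMonoid Γ] {v : K → WithTop Γ}
    (hvmul : ∀ x y : K, v (x * y) = v x + v y) {der : K → K}
    (hder_mul : ∀ x y : K, der (x * y) = der x * y + x * der y)
    (hderO : ∀ x : K, 0 ≤ v x → 0 ≤ v (der x)) {c u : K} (hc : der c = 0) (hu : v u = 0) :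
    v (c * u) ≤ v (der (c * u)) := by
  rw [der_const_mul hder_mul hc, hvmul, hvmul]
  exact add_le_add_right (hu ▸ hderO u hu.ge) _

theorem statement3_general
    {K : Type*} [Field K] {Γ : Type*} [AddCommGroup Γ] [LinearOrder Γ] [IsOrderedAddMonoid Γ]
    (v : K → WithTop Γ)
    (hv0 : ∀ x : K, v x = ⊤ ↔ x = 0)
    (hvmul : ∀ x y : K, v (x * y) = v x + v y)
    (der : K → K)
    (hder_mul : ∀ x y : K, der (x * y) = der x * y + x * der y)
    (hderO : ∀ x : K, 0 ≤ v x → 0 ≤ v (der x))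
    (hmany : ∀ γ : Γ, ∃ c : K, c ≠ 0 ∧ der c = 0 ∧ v c = (γ : WithTop Γ)) :
    ∀ a : K, a ≠ 0 → v a ≤ v (der a) := by
  intro a ha
  have hva : v a ≠ ⊤ := fun h => ha ((hv0 a).1 h)
  obtain ⟨γ, hγ⟩ := WithTop.ne_top_iff_exists.1 hva
  obtain ⟨c, hc0, hdc, hvc⟩ := hmany γ
  have hcu : c * (a / c) = a := mul_div_cancel₀ a hc0
  have hvu : v (a / c) = 0 := by
    refine WithTop.add_left_cancel (hvc ▸ hγ ▸ hva) ?_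
    rw [← hvmul, hcu, add_zero, hvc, hγ]
  simpa only [hcu] using val_le_val_der_const_mul hvmul hder_mul hderO hdc hvu

/-- A valued differential field whose derivation maps the valuation ring into
itself and which has many constants (every value is the valuation of a nonzero constant)
is monotone: `v (∂ a) ≥ v a` for every nonzero `a`. -/
theorem statement3
    {K : Type*} [Field K] {Γ : Type*} [AddCommGroup Γ] [LinearOrder Γ] [IsOrderedAddMonoid Γ]
    (v : K → WithTop Γ)
    (hv0 : ∀ x : K, v x = ⊤ ↔ x = 0)
    (hvmul : ∀ x y : K, v (x * y) = v x + v y)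
    (hvadd : ∀ x y : K, min (v x) (v y) ≤ v (x + y))
    (der : K → K)
    (hder_add : ∀ x y : K, der (x + y) = der x + der y)
    (hder_mul : ∀ x y : K, der (x * y) = der x * y + x * der y)
    (hderO : ∀ x : K, 0 ≤ v x → 0 ≤ v (der x))
    (hmany : ∀ γ : Γ, ∃ c : K, c ≠ 0 ∧ der c = 0 ∧ v c = (γ : WithTop Γ)) :
    ∀ a : K, a ≠ 0 → v a ≤ v (der a) :=
  statement3_general v hv0 hvmul der hder_mul hderO hmany
end
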